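/- Let A₀ be a nonnegative self-adjoint operator on ℌ, ψ₁,…,ψₙ ∈ ℌ_{−2}(A₀) linearly independent with span 𝒳 satisfying 𝒳 ∩ ℌ = {0}, and let A_sym be the restriction of A₀ to {u ∈ D(A₀) : ⟨ψ_j, u⟩ = 0, 1 ≤ j ≤ n}. Then the vectors h_j = (𝔸₀ + I)⁻¹ψ_j, j = 1,…,n, form a basis of the defect subspace ker(A_sym* + I). -/

import Mathlib

open InnerProductSpace

/-- The symmetric restriction `A_sym` of `A₀` to
`{u ∈ D(A₀) : ((A₀ + I)u, h j) = 0, 1 ≤ j ≤ n}`; here `h j = (𝔸₀ + I)⁻¹ ψ j`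
represents the singular element `ψ j ∈ ℌ₋₂(A₀)`. -/
noncomputable def symRestrict {H : Type*} [NormedAddCommGroup H]
    [InnerProductSpace ℂ H] [CompleteSpace H] {n : ℕ}
    (A₀ : H →ₗ.[ℂ] H) (h : Fin n → H) : H →ₗ.[ℂ] H :=
  A₀.domRestrict (Submodule.map A₀.domain.subtype
    (⨅ j : Fin n, LinearMap.ker
      (((innerSL ℂ (h j)) : H →ₗ[ℂ] ℂ) ∘ₗ (A₀.toFun + A₀.domain.subtype))))

/-!
For self-adjoint nonnegative `A₀`, the inequality `‖x‖² + ‖A₀x‖² ≤ ‖(A₀ + I)x‖²` makes the range of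
`A₀ + I` closed, and an orthogonal vector would be an eigenvector of `A₀` with eigenvalue `-1`; so
`A₀ + I` maps `D(A₀)` onto `H`. Consequently `A_sym + I` maps `D(A_sym)` onto `𝒦ᗮ`, where
`𝒦 = span {h j}`, and `ker (A_sym† + I) = (ran (A_sym + I))ᗮ = 𝒦ᗮᗮ = 𝒦`. The hypothesis
`𝒦 ∩ D(A₀) = 0` is what makes `D(A_sym)` dense, so that this description of the adjoint is valid.
-/

namespace LinearPMap

variable {𝕜 E : Type*} [RCLike 𝕜] [NormedAddCommGroup E] [InnerProductSpace 𝕜 E]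

theorem exists_adjoint_apply_eq_neg_iff [CompleteSpace E] {T : E →ₗ.[𝕜] E}
    (hT : Dense (T.domain : Set E)) (y : E) :
    (∃ hy : y ∈ T†.domain, T† ⟨y, hy⟩ = -y) ↔
      y ∈ (LinearMap.range (T.toFun + T.domain.subtype))ᗮ := by
  have hiff : ∀ x : T.domain,
      inner 𝕜 y (T x + x) = 0 ↔ inner 𝕜 (-y) (x : E) = inner 𝕜 y (T x) := fun x => by
    rw [inner_add_right, inner_neg_left, neg_eq_iff_add_eq_zero, add_comm]
  rw [Submodule.mem_orthogonal']
  constructor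
  · rintro ⟨hy, hTy⟩ _ ⟨x, rfl⟩
    refine (hiff x).mpr ?_
    rw [← hTy]
    exact adjoint_isFormalAdjoint hT ⟨y, hy⟩ x
  · intro horth
    have hadj := fun x => (hiff x).mp (horth _ ⟨x, rfl⟩)
    exact ⟨mem_adjoint_domain_of_exists y ⟨-y, hadj⟩, adjoint_apply_eq hT _ hadj⟩

theorem norm_sq_add_norm_sq_le {T : E →ₗ.[𝕜] E}
    (hT : ∀ x : T.domain, 0 ≤ RCLike.re (inner 𝕜 (x : E) (T x))) (x : T.domain) :
    ‖(x : E)‖ ^ 2 + ‖T x‖ ^ 2 ≤ ‖T x + x‖ ^ 2 := by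
  rw [add_comm (T x), norm_add_sq (𝕜 := 𝕜)]
  nlinarith [hT x]

theorem isClosed_range_add_id [CompleteSpace E] {T : E →ₗ.[𝕜] E} (hT : T.IsClosed)
    (hnonneg : ∀ x : T.domain, 0 ≤ RCLike.re (inner 𝕜 (x : E) (T x))) :
    _root_.IsClosed (LinearMap.range (T.toFun + T.domain.subtype) : Set E) := by
  have : CompleteSpace T.graph := hT.completeSpace_coe
  let f : T.graph →L[𝕜] E :=
    (ContinuousLinearMap.fst 𝕜 E E + ContinuousLinearMap.snd 𝕜 E E).comp T.graph.subtypeL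
  have hf : AntilipschitzWith 1 f := f.antilipschitz_of_bound fun p => by
    obtain ⟨x, hx₁, hx₂⟩ := (mem_graph_iff T).mp p.2
    have hle := norm_sq_add_norm_sq_le hnonneg x
    have hfp : f p = T x + x := by simp [f, hx₁, hx₂, add_comm]
    rw [NNReal.coe_one, one_mul, hfp, Submodule.coe_norm, norm_prod_le_iff, ← hx₁, ← hx₂]
    constructor <;> nlinarith [norm_nonneg (x : E), norm_nonneg (T x), norm_nonneg (T x + x)]
  have hrange : (LinearMap.range (T.toFun + T.domain.subtype) : Set E) = Set.range f := by
    ext v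
    constructor
    · rintro ⟨x, rfl⟩
      exact ⟨⟨((x : E), T x), (mem_graph_iff T).mpr ⟨x, rfl, rfl⟩⟩, by simp [f, add_comm]⟩
    · rintro ⟨p, rfl⟩
      obtain ⟨x, hx₁, hx₂⟩ := (mem_graph_iff T).mp p.2
      exact ⟨x, by simp [f, ← hx₁, ← hx₂, add_comm]⟩
  rw [hrange]
  exact hf.isClosed_range f.uniformContinuous

theorem range_add_id_eq_top [CompleteSpace E] {A : E →ₗ.[𝕜] E} (hA : IsSelfAdjoint A)
    (hnonneg : ∀ x : A.domain, 0 ≤ RCLike.re (inner 𝕜 (x : E) (A x))) :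
    LinearMap.range (A.toFun + A.domain.subtype) = ⊤ := by
  have := (isClosed_range_add_id hA.isClosed hnonneg).completeSpace_coe
  rw [← Submodule.orthogonal_eq_bot_iff, Submodule.eq_bot_iff]
  intro v hv
  have hAv := (exists_adjoint_apply_eq_neg_iff hA.dense_domain v).mpr hv
  rw [isSelfAdjoint_def.mp hA] at hAv
  obtain ⟨hv, hAv⟩ := hAv
  have hpos : 0 ≤ -‖v‖ ^ 2 := by simpa [hAv] using hnonneg ⟨v, hv⟩
  exact norm_eq_zero.mp (by nlinarith [norm_nonneg v])

theorem _root_.IsSelfAdjoint.isFormalAdjoint_self [CompleteSpace E] {A : E →ₗ.[𝕜] E}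
    (hA : IsSelfAdjoint A) : A.IsFormalAdjoint A := by
  have := adjoint_isFormalAdjoint hA.dense_domain
  rwa [isSelfAdjoint_def.mp hA] at this

theorem dense_domain_of_le [CompleteSpace E] {A S : E →ₗ.[𝕜] E} (hA : A.IsFormalAdjoint A)
    (hsurj : LinearMap.range (A.toFun + A.domain.subtype) = ⊤) (hSA : S ≤ A)
    (hS : ∀ v ∈ (LinearMap.range (S.toFun + S.domain.subtype))ᗮ, v ∈ A.domain → v = 0) :
    Dense (S.domain : Set E) := by
  rw [Submodule.dense_iff_topologicalClosure_eq_top, Submodule.topologicalClosure_eq_top_iff,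
    Submodule.eq_bot_iff]
  intro v hv
  obtain ⟨x₀, rfl⟩ := LinearMap.range_eq_top.mp hsurj v
  suffices x₀ = 0 by simp [this]
  refine Subtype.ext (hS _ ?_ x₀.2)
  rw [Submodule.mem_orthogonal']
  rintro _ ⟨x, rfl⟩
  calc inner 𝕜 (x₀ : E) (S x + x)
      = inner 𝕜 (x₀ : E) (A (Submodule.inclusion hSA.1 x) + x) := by
        rw [apply_comp_inclusion hSA]
    _ = inner 𝕜 (A x₀ + x₀) (x : E) := by
        rw [inner_add_right, inner_add_left, ← hA x₀ (Submodule.inclusion hSA.1 x)]; rfl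
    _ = 0 := Submodule.inner_left_of_mem_orthogonal x.2 hv

end LinearPMap

theorem Submodule.mem_orthogonal_span_range_iff {𝕜 E ι : Type*} [RCLike 𝕜] [NormedAddCommGroup E]
    [InnerProductSpace 𝕜 E] {v : ι → E} {w : E} :
    w ∈ (Submodule.span 𝕜 (Set.range v))ᗮ ↔ ∀ i, inner 𝕜 (v i) w = 0 := by
  rw [Submodule.span_range_eq_iSup, ← Submodule.iInf_orthogonal, Submodule.mem_iInf]
  simp only [Submodule.mem_orthogonal_singleton_iff_inner_right]

section symRestrict

variable {H : Type*} [NormedAddCommGroup H] [InnerProductSpace ℂ H] [CompleteSpace H] {n : ℕ}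
  {A₀ : H →ₗ.[ℂ] H} {h : Fin n → H}

theorem mem_symRestrict_domain_iff (x : A₀.domain) :
    (x : H) ∈ (symRestrict A₀ h).domain ↔
      A₀ x + x ∈ (Submodule.span ℂ (Set.range h))ᗮ := by
  simp [symRestrict, Submodule.mem_orthogonal_span_range_iff]

theorem range_symRestrict_add_id
    (hsurj : LinearMap.range (A₀.toFun + A₀.domain.subtype) = ⊤) :
    LinearMap.range ((symRestrict A₀ h).toFun + (symRestrict A₀ h).domain.subtype)
      = (Submodule.span ℂ (Set.range h))ᗮ := by
  have hle : symRestrict A₀ h ≤ A₀ := LinearPMap.domRestrict_le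
  ext v
  constructor
  · rintro ⟨x, rfl⟩
    have hx := (mem_symRestrict_domain_iff (Submodule.inclusion hle.1 x)).mp x.2
    rwa [← LinearPMap.apply_comp_inclusion hle] at hx
  · intro hv
    obtain ⟨x, rfl⟩ := LinearMap.range_eq_top.mp hsurj v
    refine ⟨⟨x, (mem_symRestrict_domain_iff x).mpr hv⟩, ?_⟩
    simp only [LinearMap.add_apply, LinearPMap.toFun_eq_coe, Submodule.subtype_apply]
    rw [LinearPMap.apply_comp_inclusion hle]
    rfl

end symRestrict

theorem defect_subspace_basis_general
    {H : Type*} [NormedAddCommGroup H] [InnerProductSpace ℂ H] [CompleteSpace H]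
    {n : ℕ} (A₀ : H →ₗ.[ℂ] H)
    (hsa : A₀.adjoint = A₀)
    (hnonneg : ∀ x : A₀.domain, 0 ≤ (inner ℂ (x : H) (A₀ x) : ℂ).re)
    (h : Fin n → H) (hind : LinearIndependent ℂ h)
    (hHindep : ∀ v ∈ Submodule.span ℂ (Set.range h), v ∈ A₀.domain → v = 0) :
    LinearIndependent ℂ h ∧
      ((Submodule.span ℂ (Set.range h) : Submodule ℂ H) : Set H)
        = {y : H | ∃ hy : y ∈ (symRestrict A₀ h).adjoint.domain,
            (symRestrict A₀ h).adjoint ⟨y, hy⟩ = -y} := by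
  have hsurj := LinearPMap.range_add_id_eq_top hsa hnonneg
  have hrange := range_symRestrict_add_id (h := h) hsurj
  have : FiniteDimensional ℂ (Submodule.span ℂ (Set.range h)) :=
    FiniteDimensional.span_of_finite ℂ (Set.finite_range h)
  have hK := (Submodule.span ℂ (Set.range h)).orthogonal_orthogonal
  have hdense : Dense ((symRestrict A₀ h).domain : Set H) :=
    LinearPMap.dense_domain_of_le (IsSelfAdjoint.isFormalAdjoint_self hsa) hsurj
      LinearPMap.domRestrict_le (by rwa [hrange, hK])
  refine ⟨hind, Set.ext fun y => ?_⟩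
  rw [SetLike.mem_coe, Set.mem_ofPred_eq, LinearPMap.exists_adjoint_apply_eq_neg_iff hdense,
    hrange, hK]

/-- the vectors `h j = (𝔸₀+I)⁻¹ ψ j` form a basis of the defect
subspace `ker(A_sym* + I)`: they are linearly independent and span it. -/
theorem defect_subspace_basis
    {H : Type*} [NormedAddCommGroup H] [InnerProductSpace ℂ H] [CompleteSpace H]
    {n : ℕ} (A₀ : H →ₗ.[ℂ] H)
    (hdense : Dense (A₀.domain : Set H)) (hsa : A₀.adjoint = A₀)
    (hnonneg : ∀ x : A₀.domain, 0 ≤ (inner ℂ (x : H) (A₀ x) : ℂ).re)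
    (h : Fin n → H) (hind : LinearIndependent ℂ h)
    (hHindep : ∀ v ∈ Submodule.span ℂ (Set.range h), v ∈ A₀.domain → v = 0) :
    LinearIndependent ℂ h ∧
      ((Submodule.span ℂ (Set.range h) : Submodule ℂ H) : Set H)
        = {y : H | ∃ hy : y ∈ (symRestrict A₀ h).adjoint.domain,
            (symRestrict A₀ h).adjoint ⟨y, hy⟩ = -y} :=
  defect_subspace_basis_general A₀ hsa hnonneg h hind hHindep
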